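/- Weighted-sum multi-task bound (conclusion of Step 1 of the proof of Theorem 1): Let H be a nonempty family of bounded measurable K-Lipschitz functions X → ℝ with K > 0, let D^1, …, D^T be Borel probability measures on the metric space X with bounded measurable ground-truth labeling functions f_1, …, f_T : X → ℝ, and write L_j(h) = L_{D^j}(h, f_j) and ξ_{t,i} = inf_{h ∈ H} (L_t(h) + L_i(h)). Let λ ∈ Δ_T, and for each task t let α_t ∈ Δ_T, let h_t ∈ H, and for each pair (t, i) let W_{t,i} be a dual Wasserstein bound for (D^i, D^t). Then Σ_{t=1}^T λ_t L_t(h_t) ≤ Σ_{t=1}^T λ_t Σ_{i=1}^T α_{t,i} L_i(h_t) + Σ_{t=1}^T λ_t Σ_{i=1}^T α_{t,i} ξ_{t,i} + 2K Σ_{t=1}^T λ_t Σ_{i=1}^T α_{t,i} W_{t,i}. -/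

import Mathlib

/-! Fix `t, i` and any `g ∈ H`. Passing through `g` by the triangle inequality,
`L_t(h) ≤ L_{D^t}(h, g) + L_t(g)` and `L_{D^i}(h, g) ≤ L_i(h) + L_i(g)`. The function `|h − g|`
is bounded and `2K`-Lipschitz, so after rescaling by `(2K)⁻¹` the dual Wasserstein bound gives
`L_{D^t}(h, g) ≤ L_{D^i}(h, g) + 2K W_{t,i}`. Taking the infimum over `g` bounds `L_t(h_t)` by
`L_i(h_t) + ξ_{t,i} + 2K W_{t,i}`, and averaging over `i` with weights `α_t` and then over `t`
with weights `λ` gives the result. -/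

open MeasureTheory

/-- Expected loss `L_μ(u, v) = ∫ |u(x) − v(x)| dμ(x)`. -/
noncomputable def expLoss {X : Type*} [MeasurableSpace X] (μ : Measure X)
    (u v : X → ℝ) : ℝ :=
  ∫ x, |u x - v x| ∂μ

/-- A function is bounded if its absolute values are uniformly bounded. -/
def BoundedFun {X : Type*} (g : X → ℝ) : Prop := ∃ C : ℝ, ∀ x, |g x| ≤ C

/-- `g : X → ℝ` is `K`-Lipschitz if `|g(x) − g(y)| ≤ K · d(x, y)` for all `x, y`. -/
def LipschitzCoef {X : Type*} [MetricSpace X] (K : ℝ) (g : X → ℝ) : Prop :=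
  ∀ x y, |g x - g y| ≤ K * dist x y

/-- `W` is a dual Wasserstein bound for `(μ, ν)` if `|∫ f dμ − ∫ f dν| ≤ W`
for every bounded 1-Lipschitz `f : X → ℝ`. -/
def DualWassersteinBound {X : Type*} [MetricSpace X] [MeasurableSpace X]
    (μ ν : Measure X) (W : ℝ) : Prop :=
  ∀ f : X → ℝ, BoundedFun f → LipschitzCoef 1 f →
    |(∫ x, f x ∂μ) - ∫ x, f x ∂ν| ≤ W

section Functions

variable {X : Type*}

lemma BoundedFun.abs_sub {u v : X → ℝ} (hu : BoundedFun u) (hv : BoundedFun v) :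
    BoundedFun fun x => |u x - v x| := by
  obtain ⟨Cu, hCu⟩ := hu
  obtain ⟨Cv, hCv⟩ := hv
  refine ⟨Cu + Cv, fun x => ?_⟩
  rw [abs_abs]
  exact (_root_.abs_sub _ _).trans (add_le_add (hCu x) (hCv x))

lemma BoundedFun.mul_const {u : X → ℝ} (hu : BoundedFun u) (c : ℝ) :
    BoundedFun fun x => u x * c := by
  obtain ⟨C, hC⟩ := hu
  exact ⟨C * |c|, fun x => by
    rw [abs_mul]; exact mul_le_mul_of_nonneg_right (hC x) (abs_nonneg c)⟩

lemma BoundedFun.integrable [MeasurableSpace X] {μ : Measure X} [IsFiniteMeasure μ]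
    {u : X → ℝ} (hu : BoundedFun u) (hum : Measurable u) : Integrable u μ := by
  obtain ⟨C, hC⟩ := hu
  exact .of_bound hum.aestronglyMeasurable C (.of_forall hC)

variable [MetricSpace X]

lemma LipschitzCoef.abs_sub {K K' : ℝ} {u v : X → ℝ} (hu : LipschitzCoef K u)
    (hv : LipschitzCoef K' v) : LipschitzCoef (K + K') fun x => |u x - v x| := by
  intro x y
  calc abs (|u x - v x| - |u y - v y|) ≤ |(u x - u y) - (v x - v y)| := by
        rw [show (u x - u y) - (v x - v y) = (u x - v x) - (u y - v y) by ring]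
        exact abs_abs_sub_abs_le_abs_sub _ _
    _ ≤ |u x - u y| + |v x - v y| := _root_.abs_sub _ _
    _ ≤ (K + K') * dist x y := by rw [add_mul]; exact add_le_add (hu x y) (hv x y)

lemma LipschitzCoef.mul_const {K c : ℝ} {u : X → ℝ} (hu : LipschitzCoef K u) (hc : 0 ≤ c) :
    LipschitzCoef (K * c) fun x => u x * c := by
  intro x y
  rw [← sub_mul, abs_mul, abs_of_nonneg hc, mul_right_comm]
  exact mul_le_mul_of_nonneg_right (hu x y) hc

end Functions

section Loss

variable {X : Type*} [MeasurableSpace X] {μ : Measure X}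

lemma expLoss_comm (u v : X → ℝ) : expLoss μ u v = expLoss μ v u := by
  simp only [expLoss, abs_sub_comm]

lemma expLoss_triangle [IsFiniteMeasure μ] {u v w : X → ℝ}
    (hub : BoundedFun u) (hum : Measurable u) (hvb : BoundedFun v) (hvm : Measurable v)
    (hwb : BoundedFun w) (hwm : Measurable w) :
    expLoss μ u w ≤ expLoss μ u v + expLoss μ v w := by
  have integrable_dist {a b : X → ℝ} (hab : BoundedFun a) (ham : Measurable a)
      (hbb : BoundedFun b) (hbm : Measurable b) : Integrable (fun x => |a x - b x|) μ :=
    (hab.abs_sub hbb).integrable (ham.sub hbm).abs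
  rw [expLoss, expLoss, expLoss, ← integral_add (integrable_dist hub hum hvb hvm)
    (integrable_dist hvb hvm hwb hwm)]
  exact integral_mono (integrable_dist hub hum hwb hwm)
    ((integrable_dist hub hum hvb hvm).add (integrable_dist hvb hvm hwb hwm))
    fun x => abs_sub_le _ _ _

end Loss

section Wasserstein

variable {X : Type*} [MetricSpace X] [MeasurableSpace X] {μ ν : Measure X} {W : ℝ}

lemma DualWassersteinBound.abs_integral_sub_le (hW : DualWassersteinBound μ ν W) {K : ℝ}
    (hK : 0 < K) {φ : X → ℝ} (hb : BoundedFun φ) (hl : LipschitzCoef K φ) :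
    |(∫ x, φ x ∂μ) - ∫ x, φ x ∂ν| ≤ K * W := by
  have hscaled := hW _ (hb.mul_const K⁻¹) (by
    simpa only [mul_inv_cancel₀ hK.ne'] using hl.mul_const (inv_nonneg.mpr hK.le))
  rw [integral_mul_const, integral_mul_const, ← sub_mul, abs_mul,
    abs_of_pos (inv_pos.mpr hK), ← div_eq_mul_inv, div_le_iff₀ hK] at hscaled
  linarith

variable [IsFiniteMeasure μ] [IsFiniteMeasure ν]

lemma expLoss_le_of_dualWassersteinBound (hW : DualWassersteinBound ν μ W) {K : ℝ}
    (hK : 0 < K) {u g fμ fν : X → ℝ}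
    (hub : BoundedFun u) (hum : Measurable u) (hul : LipschitzCoef K u)
    (hgb : BoundedFun g) (hgm : Measurable g) (hgl : LipschitzCoef K g)
    (hfμb : BoundedFun fμ) (hfμm : Measurable fμ) (hfνb : BoundedFun fν) (hfνm : Measurable fν) :
    expLoss μ u fμ ≤ expLoss ν u fν + (expLoss μ g fμ + expLoss ν g fν) + 2 * K * W := by
  have transport : expLoss μ u g ≤ expLoss ν u g + 2 * K * W := by
    have h := hW.abs_integral_sub_le (by positivity : 0 < 2 * K) (hub.abs_sub hgb)
      (by simpa only [two_mul] using hul.abs_sub hgl)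
    rw [abs_sub_comm] at h
    exact sub_le_iff_le_add'.mp ((le_abs_self _).trans h)
  have through_g_μ := expLoss_triangle (μ := μ) hub hum hgb hgm hfμb hfμm
  have through_g_ν := expLoss_triangle (μ := ν) hub hum hfνb hfνm hgb hgm
  rw [expLoss_comm fν g] at through_g_ν
  linarith

lemma expLoss_le_add_iInf (hW : DualWassersteinBound ν μ W) {K : ℝ} (hK : 0 < K)
    {H : Set (X → ℝ)} (hHb : ∀ g ∈ H, BoundedFun g) (hHm : ∀ g ∈ H, Measurable g)
    (hHl : ∀ g ∈ H, LipschitzCoef K g) {u fμ fν : X → ℝ} (hu : u ∈ H)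
    (hfμb : BoundedFun fμ) (hfμm : Measurable fμ) (hfνb : BoundedFun fν) (hfνm : Measurable fν) :
    expLoss μ u fμ ≤
      expLoss ν u fν + (⨅ g : H, (expLoss μ (g : X → ℝ) fμ + expLoss ν (g : X → ℝ) fν))
        + 2 * K * W := by
  have : Nonempty H := ⟨⟨u, hu⟩⟩
  have h : expLoss μ u fμ - expLoss ν u fν - 2 * K * W ≤
      ⨅ g : H, (expLoss μ (g : X → ℝ) fμ + expLoss ν (g : X → ℝ) fν) :=
    le_ciInf fun g => by
      linarith [expLoss_le_of_dualWassersteinBound hW hK (hHb u hu) (hHm u hu) (hHl u hu)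
        (hHb g g.2) (hHm g g.2) (hHl g g.2) hfμb hfμm hfνb hfνm]
  linarith

end Wasserstein

lemma le_sum_mul_of_le {ι : Type*} {s : Finset ι} {α y : ι → ℝ} {x : ℝ}
    (hα0 : ∀ i ∈ s, 0 ≤ α i) (hα1 : ∑ i ∈ s, α i = 1) (hxy : ∀ i ∈ s, x ≤ y i) :
    x ≤ ∑ i ∈ s, α i * y i :=
  calc x = ∑ i ∈ s, α i * x := by rw [← Finset.sum_mul, hα1, one_mul]
    _ ≤ ∑ i ∈ s, α i * y i :=
      Finset.sum_le_sum fun i hi => mul_le_mul_of_nonneg_left (hxy i hi) (hα0 i hi)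

theorem weighted_sum_multitask_bound_general
    {X : Type*} [MetricSpace X] [MeasurableSpace X]
    (K : ℝ) (hK : 0 < K)
    (H : Set (X → ℝ))
    (hHb : ∀ g ∈ H, BoundedFun g)
    (hHm : ∀ g ∈ H, Measurable g)
    (hHl : ∀ g ∈ H, LipschitzCoef K g)
    (T : ℕ)
    (D : Fin T → Measure X) (hD : ∀ j, IsProbabilityMeasure (D j))
    (f : Fin T → X → ℝ)
    (hfb : ∀ j, BoundedFun (f j)) (hfm : ∀ j, Measurable (f j))
    (lam : Fin T → ℝ) (hlam0 : ∀ t, 0 ≤ lam t)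
    (α : Fin T → Fin T → ℝ) (hα0 : ∀ t i, 0 ≤ α t i) (hα1 : ∀ t, ∑ i, α t i = 1)
    (h : Fin T → X → ℝ) (hh : ∀ t, h t ∈ H)
    (W : Fin T → Fin T → ℝ)
    (hW : ∀ t i, DualWassersteinBound (D i) (D t) (W t i)) :
    ∑ t, lam t * expLoss (D t) (h t) (f t) ≤
      (∑ t, lam t * ∑ i, α t i * expLoss (D i) (h t) (f i))
      + (∑ t, lam t * ∑ i, α t i * (⨅ g : H, (expLoss (D t) (g : X → ℝ) (f t)
            + expLoss (D i) (g : X → ℝ) (f i))))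
      + 2 * K * ∑ t, lam t * ∑ i, α t i * W t i := by
  have pairwise_bound (t i : Fin T) := expLoss_le_add_iInf (hW t i) hK hHb hHm hHl (hh t)
    (hfb t) (hfm t) (hfb i) (hfm i)
  calc ∑ t, lam t * expLoss (D t) (h t) (f t)
      ≤ ∑ t, lam t * ∑ i, α t i * (expLoss (D i) (h t) (f i)
          + (⨅ g : H, (expLoss (D t) (g : X → ℝ) (f t) + expLoss (D i) (g : X → ℝ) (f i)))
          + 2 * K * W t i) :=
        Finset.sum_le_sum fun t _ => mul_le_mul_of_nonneg_left
          (le_sum_mul_of_le (fun i _ => hα0 t i) (hα1 t) fun i _ => pairwise_bound t i) (hlam0 t)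
    _ = _ := by
        simp only [mul_add, Finset.sum_add_distrib, Finset.mul_sum]
        congr 1
        exact Finset.sum_congr rfl fun t _ => Finset.sum_congr rfl fun i _ => by ring

/-- Weighted-sum multi-task bound (conclusion of Step 1 of the proof of Theorem 1):
`Σ_t λ_t L_t(h_t) ≤ Σ_t λ_t Σ_i α_{t,i} L_i(h_t) + Σ_t λ_t Σ_i α_{t,i} ξ_{t,i}
 + 2K Σ_t λ_t Σ_i α_{t,i} W_{t,i}`, where `ξ_{t,i} = inf_{g ∈ H} (L_t(g) + L_i(g))`. -/
theorem weighted_sum_multitask_bound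
    {X : Type*} [MetricSpace X] [MeasurableSpace X] [BorelSpace X]
    (K : ℝ) (hK : 0 < K)
    (H : Set (X → ℝ)) (hHne : H.Nonempty)
    (hHb : ∀ g ∈ H, BoundedFun g)
    (hHm : ∀ g ∈ H, Measurable g)
    (hHl : ∀ g ∈ H, LipschitzCoef K g)
    (T : ℕ)
    (D : Fin T → Measure X) (hD : ∀ j, IsProbabilityMeasure (D j))
    (f : Fin T → X → ℝ)
    (hfb : ∀ j, BoundedFun (f j)) (hfm : ∀ j, Measurable (f j))
    (lam : Fin T → ℝ) (hlam0 : ∀ t, 0 ≤ lam t) (hlam1 : ∑ t, lam t = 1)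
    (α : Fin T → Fin T → ℝ) (hα0 : ∀ t i, 0 ≤ α t i) (hα1 : ∀ t, ∑ i, α t i = 1)
    (h : Fin T → X → ℝ) (hh : ∀ t, h t ∈ H)
    (W : Fin T → Fin T → ℝ)
    (hW : ∀ t i, DualWassersteinBound (D i) (D t) (W t i)) :
    ∑ t, lam t * expLoss (D t) (h t) (f t) ≤
      (∑ t, lam t * ∑ i, α t i * expLoss (D i) (h t) (f i))
      + (∑ t, lam t * ∑ i, α t i * (⨅ g : H, (expLoss (D t) (g : X → ℝ) (f t)
            + expLoss (D i) (g : X → ℝ) (f i))))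
      + 2 * K * ∑ t, lam t * ∑ i, α t i * W t i :=
  weighted_sum_multitask_bound_general K hK H hHb hHm hHl T D hD f hfb hfm lam hlam0 α hα0 hα1 h hh
    W hW
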